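/- Let L be a complete enriched Lie algebra with dim L/L^{(2)} < ∞. Then the lower central series and the closed lower central series coincide: L^k = L^{(k)} for all k ≥ 1. In particular each [L, L^{(k-1)}] contains L^{(k)}. -/

import Mathlib

section EnrichedPre

variable {L : Type*} [LieRing L] [LieAlgebra ℚ L]

/-- `lcsIn A n` is the span of iterated Lie brackets of length `n+1` with entries in `A`
(so `lcsIn ⊤ (k-1)` is the `k`-th term `L^k` of the lower central series). -/
def lcsIn (A : Submodule ℚ L) : ℕ → Submodule ℚ L
  | 0 => A
  | n + 1 => Submodule.span ℚ {z : L | ∃ x ∈ A, ∃ y ∈ lcsIn A n, ⁅x, y⁆ = z}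

/-- The closure of a subspace `S` in an enriched Lie algebra `(L, {I α})`:
the set of limits of coherent families of elements of `S`, i.e. of those `x`
whose image in each `L ⧸ I α` lies in the image of `S`. -/
def encl {ι : Type*} (I : ι → LieIdeal ℚ L) (S : Submodule ℚ L) : Submodule ℚ L where
  carrier := {x : L | ∀ α, ∃ s ∈ S, x - s ∈ (I α : Submodule ℚ L)}
  add_mem' := by
    intro a b ha hb α
    obtain ⟨s, hs, h1⟩ := ha α
    obtain ⟨t, ht, h2⟩ := hb α
    exact ⟨s + t, S.add_mem hs ht, by
      simpa [add_sub_add_comm] using Submodule.add_mem _ h1 h2⟩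
  zero_mem' := fun α => ⟨0, S.zero_mem, by simp⟩
  smul_mem' := by
    intro c a ha α
    obtain ⟨s, hs, h1⟩ := ha α
    exact ⟨c • s, S.smul_mem c hs, by
      simpa [smul_sub] using Submodule.smul_mem _ c h1⟩

/-- `(L, {I α})` is an enriched Lie algebra: a directed family of ideals with
finite-dimensional nilpotent quotients and trivial intersection. -/
def IsEnriched {ι : Type*} (I : ι → LieIdeal ℚ L) : Prop :=
  (∀ α β, ∃ γ, I γ ≤ I α ⊓ I β) ∧
  (∀ α, FiniteDimensional ℚ (L ⧸ I α)) ∧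
  (∀ α, LieRing.IsNilpotent (L ⧸ I α)) ∧
  (⨅ α, I α) = ⊥

/-- Completeness of `(L, {I α})`: every coherent family in `lim_α L/I α`
(presented by compatible representatives) has a limit in `L`. -/
def IsCompleteWrt {ι : Type*} (I : ι → LieIdeal ℚ L) : Prop :=
  ∀ y : ι → L, (∀ α β, I β ≤ I α → y β - y α ∈ (I α : Submodule ℚ L)) →
    ∃ x : L, ∀ α, x - y α ∈ (I α : Submodule ℚ L)

end EnrichedPre

/-!
A closed subspace plus a finite-dimensional one is closed, because some `I α` separates a vector
from a closed subspace not containing it. Lifting a basis of `L/L^{(2)}` to `x₁, …, xₙ`, induction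
on `r` covers `L^r` modulo `L^{(r+1)}` by a finite-dimensional space of brackets of the `xᵢ`, so
`L^{(r+1)} ⊆ ∑ᵢ [xᵢ, L^{(r)}] + L^{(r+2)}`. Iterating, every element of `L^{(r+1)}` is a convergent
series, hence by completeness equal to `∑ᵢ [xᵢ, wᵢ]` with `wᵢ ∈ L^{(r)}`; induction on `r` then
gives `L^{(r)} = L^r`.
-/

open Filter

section Closure

variable {L ι : Type*} [LieRing L] [LieAlgebra ℚ L] (I : ι → LieIdeal ℚ L)

lemma le_encl (S : Submodule ℚ L) : S ≤ encl I S :=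
  fun s hs _ => ⟨s, hs, by simp⟩

variable {I}

lemma encl_mono {S T : Submodule ℚ L} (h : S ≤ T) : encl I S ≤ encl I T :=
  fun _ hx α => (hx α).imp fun _ ⟨hs, hxs⟩ => ⟨h hs, hxs⟩

lemma encl_encl (S : Submodule ℚ L) : encl I (encl I S) = encl I S := by
  refine le_antisymm (fun x hx α => ?_) (le_encl I _)
  obtain ⟨y, hy, hxy⟩ := hx α
  obtain ⟨s, hs, hys⟩ := hy α
  exact ⟨s, hs, by simpa using add_mem hxy hys⟩

lemma encl_le_of_le {S : Submodule ℚ L} {α : ι} (h : S ≤ I α) : encl I S ≤ I α := by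
  intro x hx
  obtain ⟨s, hs, hxs⟩ := hx α
  simpa using add_mem hxs (h hs)

lemma lie_mem_encl_left {S T : Submodule ℚ L} {x y : L} (hx : x ∈ encl I S)
    (h : ∀ a ∈ S, ⁅a, y⁆ ∈ T) : ⁅x, y⁆ ∈ encl I T := fun α => by
  obtain ⟨a, ha, hxa⟩ := hx α
  exact ⟨⁅a, y⁆, h a ha, by simpa [sub_lie] using lie_mem_left ℚ L (I α) _ y hxa⟩

lemma lie_mem_encl_right {S T : Submodule ℚ L} {x y : L} (hy : y ∈ encl I S)
    (h : ∀ b ∈ S, ⁅x, b⁆ ∈ T) : ⁅x, y⁆ ∈ encl I T := fun α => by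
  obtain ⟨b, hb, hyb⟩ := hy α
  exact ⟨⁅x, b⁆, h b hb, by simpa [lie_sub] using lie_mem_right ℚ L (I α) x _ hyb⟩

/-- A closed subspace plus a line is closed: if `v ∉ S`, some `I α₀` already separates `v` from
`S`, which pins down the coefficient of `v` in every approximation. -/
lemma encl_sup_span_singleton (hdir : ∀ α β, ∃ γ, I γ ≤ I α ⊓ I β) {S : Submodule ℚ L}
    (hS : encl I S = S) (v : L) : encl I (S ⊔ ℚ ∙ v) = S ⊔ ℚ ∙ v := by
  by_cases hvS : v ∈ S
  · rwa [sup_eq_left.mpr ((Submodule.span_singleton_le_iff_mem _ _).mpr hvS)]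
  refine le_antisymm (fun x hx => ?_) (le_encl I _)
  have approx : ∀ α, ∃ s ∈ S, ∃ c : ℚ, x - (s + c • v) ∈ I α := fun α => by
    obtain ⟨t, ht, hxt⟩ := hx α
    obtain ⟨s, hs, w, hw, rfl⟩ := Submodule.mem_sup.mp ht
    obtain ⟨c, rfl⟩ := Submodule.mem_span_singleton.mp hw
    exact ⟨s, hs, c, hxt⟩
  obtain ⟨α₀, hα₀⟩ : ∃ α₀, ∀ s ∈ S, v - s ∉ I α₀ := by
    by_contra! h
    exact hvS (hS ▸ h)
  obtain ⟨s₀, hs₀, c₀, hx₀⟩ := approx α₀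
  suffices x - c₀ • v ∈ encl I S by
    rw [hS] at this
    simpa using Submodule.add_mem_sup this (Submodule.smul_mem _ c₀ (Submodule.mem_span_singleton_self v))
  intro α
  obtain ⟨γ, hγ⟩ := hdir α α₀
  obtain ⟨s, hs, c, hx⟩ := approx γ
  have hc : c = c₀ := by
    by_contra hne
    have hdiff : (c - c₀) • v - (s₀ - s) ∈ I α₀ := by
      convert sub_mem hx₀ (hγ hx).2 using 1
      rw [sub_smul]; abel
    refine hα₀ ((c - c₀)⁻¹ • (s₀ - s)) (S.smul_mem _ (sub_mem hs₀ hs)) ?_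
    simpa [smul_sub, smul_smul, inv_mul_cancel₀ (sub_ne_zero.mpr hne)] using
      (I α₀ : Submodule ℚ L).smul_mem (c - c₀)⁻¹ hdiff
  subst hc
  exact ⟨s, hs, by simpa [sub_sub, add_comm] using (hγ hx).1⟩

lemma encl_sup_of_fg (hdir : ∀ α β, ∃ γ, I γ ≤ I α ⊓ I β) {S F : Submodule ℚ L}
    (hS : encl I S = S) (hF : F.FG) : encl I (S ⊔ F) = S ⊔ F := by
  induction F, hF using Submodule.fg_induction generalizing S with
  | singleton v => exact encl_sup_span_singleton hdir hS v
  | sup F₁ F₂ _ _ ih₁ ih₂ => rw [← sup_assoc]; exact ih₂ (ih₁ hS)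

lemma eq_zero_of_forall_mem (hinf : (⨅ α, I α) = ⊥) {x : L} (hx : ∀ α, x ∈ I α) : x = 0 := by
  simpa [← LieSubmodule.mem_bot (R := ℚ) (L := L), ← hinf] using hx

lemma IsCompleteWrt.exists_limit (hC : IsCompleteWrt I) (s : ℕ → L)
    (hs : ∀ α, ∀ᶠ k in atTop, s (k + 1) - s k ∈ I α) :
    ∃ w, ∀ α, ∀ᶠ k in atTop, w - s k ∈ I α := by
  have cauchy : ∀ α, ∃ N, ∀ k ≥ N, s k - s N ∈ I α := fun α => by
    obtain ⟨N, hN⟩ := eventually_atTop.mp (hs α)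
    refine ⟨N, fun k hk => ?_⟩
    induction k, hk using Nat.le_induction with
    | base => simp
    | succ k hk ih => simpa using add_mem (hN k hk) ih
  choose N hN using cauchy
  obtain ⟨w, hw⟩ := hC (fun α => s (N α)) fun α β hβα => by
    rcases le_total (N α) (N β) with h | h
    · exact hN α (N β) h
    · simpa using hβα (neg_mem (hN β (N α) h))
  refine ⟨w, fun α => eventually_atTop.mpr ⟨N α, fun k hk => ?_⟩⟩
  simpa using sub_mem (hw α) (hN α k hk)

end Closure

section LowerCentralSeries

variable {L : Type*} [LieRing L] [LieAlgebra ℚ L]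

lemma lcsIn_top_eq_lowerCentralSeries (k : ℕ) :
    lcsIn (⊤ : Submodule ℚ L) k = (LieModule.lowerCentralSeries ℚ L L k).toSubmodule := by
  induction k with
  | zero => rfl
  | succ k ih =>
    rw [lcsIn, LieModule.lowerCentralSeries_succ, LieSubmodule.lieIdeal_oper_eq_linear_span', ih]
    simp

lemma lcsIn_top_antitone : Antitone (lcsIn (⊤ : Submodule ℚ L)) := fun a b h => by
  simpa only [lcsIn_top_eq_lowerCentralSeries, LieSubmodule.toSubmodule_le_toSubmodule] using
    LieModule.antitone_lowerCentralSeries ℚ L L h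

lemma lie_mem_lcsIn_top_succ {k : ℕ} (x : L) {y : L} (hy : y ∈ lcsIn (⊤ : Submodule ℚ L) k) :
    ⁅x, y⁆ ∈ lcsIn (⊤ : Submodule ℚ L) (k + 1) :=
  Submodule.subset_span ⟨x, trivial, y, hy, rfl⟩

lemma lie_mem_lcsIn_top_add_two {k : ℕ} {x y : L} (hx : x ∈ lcsIn (⊤ : Submodule ℚ L) 1)
    (hy : y ∈ lcsIn (⊤ : Submodule ℚ L) k) : ⁅x, y⁆ ∈ lcsIn (⊤ : Submodule ℚ L) (k + 2) := by
  induction hx using Submodule.span_induction with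
  | mem w hw =>
    obtain ⟨u, -, v, -, rfl⟩ := hw
    rw [lie_lie]
    exact sub_mem (lie_mem_lcsIn_top_succ _ (lie_mem_lcsIn_top_succ _ hy))
      (lie_mem_lcsIn_top_succ _ (lie_mem_lcsIn_top_succ _ hy))
  | zero => simp
  | add a b _ _ ha hb => rw [add_lie]; exact add_mem ha hb
  | smul c a _ ha => rw [smul_lie]; exact Submodule.smul_mem _ c ha

lemma exists_lcsIn_top_le_of_isNilpotent (J : LieIdeal ℚ L) [LieRing.IsNilpotent (L ⧸ J)] :
    ∃ k, lcsIn (⊤ : Submodule ℚ L) k ≤ J := by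
  suffices LieModule.IsNilpotent L (L ⧸ J) by
    obtain ⟨k, hk⟩ := (LieModule.isNilpotent_quotient_iff ℚ L L J).mp this
    exact ⟨k, by rw [lcsIn_top_eq_lowerCentralSeries]; exact hk⟩
  have hJ := ‹LieRing.IsNilpotent (L ⧸ J)›
  simp only [LieRing.IsNilpotent, LieModule.isNilpotent_iff ℚ] at hJ ⊢
  peel hJ with k hk
  simp [← LieSubmodule.toSubmodule_inj, coe_lowerCentralSeries_ideal_quot_eq, hk]

end LowerCentralSeries

lemma Submodule.exists_fin_span_range_sup_eq_top {R M : Type*} [Ring R] [AddCommGroup M]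
    [Module R M] (S : Submodule R M) [Module.Finite R (M ⧸ S)] :
    ∃ (n : ℕ) (x : Fin n → M), span R (Set.range x) ⊔ S = ⊤ := by
  obtain ⟨n, s, hs⟩ := Module.Finite.exists_fin (R := R) (M := M ⧸ S)
  choose x hx using fun i => S.mkQ_surjective (s i)
  refine ⟨n, x, ?_⟩
  rw [sup_comm, ← Submodule.map_mkQ_eq_top, Submodule.map_span, ← Set.range_comp,
    show S.mkQ ∘ x = s from funext hx, hs]

section BracketSum

open Submodule

variable {L ι : Type*} [LieRing L] [LieAlgebra ℚ L] {n : ℕ} (x : Fin n → L)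

def bracketSum : (Fin n → L) →ₗ[ℚ] L where
  toFun z := ∑ i, ⁅x i, z i⁆
  map_add' z w := by simp [lie_add, Finset.sum_add_distrib]
  map_smul' c z := by simp [Finset.smul_sum]

lemma bracketSum_apply (z : Fin n → L) : bracketSum x z = ∑ i, ⁅x i, z i⁆ := rfl

lemma bracketSum_mem (J : LieIdeal ℚ L) {z : Fin n → L} (hz : ∀ i, z i ∈ J) :
    bracketSum x z ∈ J := by
  rw [bracketSum_apply]
  exact sum_mem fun i _ => lie_mem_right ℚ L J _ _ (hz i)

lemma map_bracketSum_pi_lcsIn_top_le (m : ℕ) :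
    (pi Set.univ fun _ => lcsIn (⊤ : Submodule ℚ L) m).map (bracketSum x) ≤
      lcsIn (⊤ : Submodule ℚ L) (m + 1) := by
  rintro _ ⟨z, hz, rfl⟩
  rw [bracketSum_apply]
  exact sum_mem fun i _ => lie_mem_lcsIn_top_succ _ (hz i trivial)

variable {x} {I : ι → LieIdeal ℚ L}

lemma lcsIn_top_succ_le_map_pi_sup
    (hx : span ℚ (Set.range x) ⊔ encl I (lcsIn (⊤ : Submodule ℚ L) 1) = ⊤)
    {m : ℕ} {F : Submodule ℚ L}
    (hFm : F ≤ lcsIn (⊤ : Submodule ℚ L) m)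
    (hF : lcsIn (⊤ : Submodule ℚ L) m ≤ F ⊔ encl I (lcsIn (⊤ : Submodule ℚ L) (m + 1))) :
    lcsIn (⊤ : Submodule ℚ L) (m + 1) ≤
      (pi Set.univ fun _ => F).map (bracketSum x) ⊔ encl I (lcsIn (⊤ : Submodule ℚ L) (m + 2)) := by
  rw [lcsIn, span_le]
  rintro _ ⟨u, -, y, hy, rfl⟩
  obtain ⟨a, ha, q, hq, rfl⟩ := mem_sup.mp (hx.ge (mem_top : u ∈ ⊤))
  obtain ⟨c, rfl⟩ := (mem_span_range_iff_exists_fun ℚ).mp ha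
  obtain ⟨f, hf, e, he, rfl⟩ := mem_sup.mp (hF hy)
  have hcoord : ⁅∑ i, c i • x i, f⁆ = bracketSum x (fun i => c i • f) := by
    simp [sum_lie, bracketSum_apply]
  rw [lie_add, add_lie, hcoord, add_assoc]
  refine add_mem_sup ⟨_, fun i _ => F.smul_mem _ hf, rfl⟩ (add_mem ?_ ?_)
  · exact lie_mem_encl_left hq fun b hb => lie_mem_lcsIn_top_add_two hb (hFm hf)
  · exact lie_mem_encl_right he fun b hb => lie_mem_lcsIn_top_succ _ hb

lemma exists_fg_le_lcsIn_top
    (hx : span ℚ (Set.range x) ⊔ encl I (lcsIn (⊤ : Submodule ℚ L) 1) = ⊤) (m : ℕ) :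
    ∃ F : Submodule ℚ L, F.FG ∧ F ≤ lcsIn (⊤ : Submodule ℚ L) m ∧
      lcsIn (⊤ : Submodule ℚ L) m ≤ F ⊔ encl I (lcsIn (⊤ : Submodule ℚ L) (m + 1)) := by
  induction m with
  | zero => exact ⟨_, fg_span (Set.finite_range x), le_top, hx.ge⟩
  | succ m ih =>
    obtain ⟨F, hFfg, hFm, hF⟩ := ih
    exact ⟨_, (fg_pi fun _ => hFfg).map _,
      (Submodule.map_mono (pi_mono fun _ _ => hFm)).trans (map_bracketSum_pi_lcsIn_top_le x m),
      lcsIn_top_succ_le_map_pi_sup hx hFm hF⟩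

lemma encl_lcsIn_top_succ_le_map_pi_sup
    (hx : span ℚ (Set.range x) ⊔ encl I (lcsIn (⊤ : Submodule ℚ L) 1) = ⊤)
    (hdir : ∀ α β, ∃ γ, I γ ≤ I α ⊓ I β) (m : ℕ) :
    encl I (lcsIn (⊤ : Submodule ℚ L) (m + 1)) ≤
      (pi Set.univ fun _ => encl I (lcsIn (⊤ : Submodule ℚ L) m)).map (bracketSum x) ⊔
        encl I (lcsIn (⊤ : Submodule ℚ L) (m + 2)) := by
  obtain ⟨F, hFfg, hFm, hF⟩ := exists_fg_le_lcsIn_top hx m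
  calc encl I (lcsIn (⊤ : Submodule ℚ L) (m + 1))
      ≤ encl I (encl I (lcsIn (⊤ : Submodule ℚ L) (m + 2)) ⊔
          (pi Set.univ fun _ => F).map (bracketSum x)) :=
        encl_mono ((lcsIn_top_succ_le_map_pi_sup hx hFm hF).trans_eq (sup_comm _ _))
    _ = encl I (lcsIn (⊤ : Submodule ℚ L) (m + 2)) ⊔
          (pi Set.univ fun _ => F).map (bracketSum x) :=
        encl_sup_of_fg hdir (encl_encl _) ((fg_pi fun _ => hFfg).map _)
    _ ≤ _ := by
      rw [sup_comm]
      exact sup_le_sup_right (Submodule.map_mono (pi_mono fun _ _ => hFm.trans (le_encl I _))) _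

/-- `y` is the sum of the series `∑ₖ bracketSum x (v k)`, where `v k` comes from the previous lemma
at level `m + k`; completeness makes the partial sums converge coordinatewise. -/
lemma encl_lcsIn_top_succ_le_map_pi
    (hx : span ℚ (Set.range x) ⊔ encl I (lcsIn (⊤ : Submodule ℚ L) 1) = ⊤)
    (hdir : ∀ α β, ∃ γ, I γ ≤ I α ⊓ I β)
    (hnil : ∀ α, LieRing.IsNilpotent (L ⧸ I α)) (hinf : (⨅ α, I α) = ⊥) (hC : IsCompleteWrt I)
    (m : ℕ) :
    encl I (lcsIn (⊤ : Submodule ℚ L) (m + 1)) ≤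
      (pi Set.univ fun _ => encl I (lcsIn (⊤ : Submodule ℚ L) m)).map (bracketSum x) := by
  intro y hy
  have step : ∀ (k : ℕ) (r : L), ∃ v : Fin n → L,
      r ∈ encl I (lcsIn (⊤ : Submodule ℚ L) (m + k + 1)) →
        (∀ i, v i ∈ encl I (lcsIn (⊤ : Submodule ℚ L) (m + k))) ∧
          r - bracketSum x v ∈ encl I (lcsIn (⊤ : Submodule ℚ L) (m + k + 2)) := by
    intro k r
    by_cases hr : r ∈ encl I (lcsIn (⊤ : Submodule ℚ L) (m + k + 1))
    · obtain ⟨_, ⟨v, hv, rfl⟩, e, he, hre⟩ :=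
        mem_sup.mp (encl_lcsIn_top_succ_le_map_pi_sup hx hdir (m + k) hr)
      exact ⟨v, fun _ => ⟨fun i => hv i trivial, by rwa [← hre, add_sub_cancel_left]⟩⟩
    · exact ⟨0, fun h => absurd h hr⟩
  choose v hv using step
  let s : ℕ → Fin n → L := fun k => Nat.rec 0 (fun k sk => sk + v k (y - bracketSum x sk)) k
  have hrem : ∀ k, y - bracketSum x (s k) ∈ encl I (lcsIn (⊤ : Submodule ℚ L) (m + k + 1)) := by
    intro k
    induction k with
    | zero => simpa [s] using hy
    | succ k ih =>
      rw [show s (k + 1) = s k + v k (y - bracketSum x (s k)) from rfl, map_add, ← sub_sub]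
      exact (hv k _ ih).2
  have hinc : ∀ k i, s (k + 1) i - s k i ∈ encl I (lcsIn (⊤ : Submodule ℚ L) (m + k)) :=
    fun k i => by simpa [s] using (hv k _ (hrem k)).1 i
  have hs : ∀ k i, s k i ∈ encl I (lcsIn (⊤ : Submodule ℚ L) m) := by
    intro k i
    induction k with
    | zero => exact zero_mem _
    | succ k ih =>
      simpa using add_mem ih (encl_mono (lcsIn_top_antitone (Nat.le_add_right m k)) (hinc k i))
  have small : ∀ α, ∀ᶠ k in atTop, encl I (lcsIn (⊤ : Submodule ℚ L) (m + k)) ≤ I α := by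
    intro α
    have := hnil α
    obtain ⟨N, hN⟩ := exists_lcsIn_top_le_of_isNilpotent (I α)
    exact eventually_atTop.mpr ⟨N, fun k hk =>
      (encl_mono (lcsIn_top_antitone (by omega))).trans (encl_le_of_le hN)⟩
  choose w hw using fun i => hC.exists_limit (fun k => s k i)
    fun α => (small α).mono fun k hk => hk (hinc k i)
  refine ⟨w, fun i _ => ?_, sub_eq_zero.mp (eq_zero_of_forall_mem hinf fun α => ?_)⟩
  · rw [← encl_encl]
    intro α
    obtain ⟨k, hk⟩ := (hw i α).exists
    exact ⟨s k i, hs k i, hk⟩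
  · obtain ⟨k, hwk, hyk⟩ := ((eventually_all.mpr fun i => hw i α).and ((small α).mono
      fun k hk => hk (encl_mono (lcsIn_top_antitone (Nat.le_succ _)) (hrem k)))).exists
    have hΦ := bracketSum_mem x (I α) (z := w - s k) hwk
    rw [map_sub] at hΦ
    simpa using sub_mem hΦ hyk

end BracketSum

/-- If `L` is a complete enriched Lie algebra with `L/L^{(2)}`
finite-dimensional, then the lower central series and the closed lower central series
coincide: `L^k = L^{(k)}` for all `k ≥ 1`; in particular `L^{(k)} ⊆ [L, L^{(k-1)}]`. -/
theorem stmt14 {ι L : Type*} [LieRing L] [LieAlgebra ℚ L]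
    (I : ι → LieIdeal ℚ L) (hE : IsEnriched I) (hC : IsCompleteWrt I)
    (hfd : FiniteDimensional ℚ (L ⧸ encl I (lcsIn (⊤ : Submodule ℚ L) 1))) :
    (∀ m : ℕ, lcsIn (⊤ : Submodule ℚ L) m = encl I (lcsIn (⊤ : Submodule ℚ L) m)) ∧
    (∀ m : ℕ, encl I (lcsIn (⊤ : Submodule ℚ L) (m + 1)) ≤
      Submodule.span ℚ
        {z : L | ∃ x : L, ∃ y ∈ encl I (lcsIn (⊤ : Submodule ℚ L) m), ⁅x, y⁆ = z}) := by
  obtain ⟨hdir, -, hnil, hinf⟩ := hE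
  obtain ⟨n, x, hx⟩ := Submodule.exists_fin_span_range_sup_eq_top (encl I (lcsIn ⊤ 1))
  have key := encl_lcsIn_top_succ_le_map_pi hx hdir hnil hinf hC
  have closed : ∀ m, lcsIn (⊤ : Submodule ℚ L) m = encl I (lcsIn (⊤ : Submodule ℚ L) m) := by
    intro m
    refine le_antisymm (le_encl I _) ?_
    induction m with
    | zero => exact le_top
    | succ m ih =>
      exact (key m).trans ((Submodule.map_mono (Submodule.pi_mono fun _ _ => ih)).trans
        (map_bracketSum_pi_lcsIn_top_le x m))
  refine ⟨closed, fun m => (key m).trans ?_⟩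
  rintro _ ⟨w, hw, rfl⟩
  rw [bracketSum_apply]
  exact Submodule.sum_mem _ fun i _ => Submodule.subset_span ⟨x i, w i, hw i trivial, rfl⟩
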